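/- Let λ > 2 and h₂ = !![-λ/2, 1; -3λ²/4 - 1, 3λ/2] ∈ SL(2,ℝ), so that h₂⁻¹ = !![3λ/2, -1; 3λ²/4 + 1, -λ/2]. Then for every z in the closure of 𝓔₁ one has (3λ²/4 + 1)z − λ/2 ≠ 0, and h₂⁻¹.z = ((3λ/2)z − 1)/((3λ²/4 + 1)z − λ/2) lies in 𝓔₁; that is, h₂⁻¹ maps the closure of 𝓔₁ into 𝓔₁. -/

import Mathlib

/-!
The disc with centre `2μ/(μ²-4)` and radius `4/(μ²-4)` is `{z | H_μ(z, 1) < 0}` for the Hermitian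
form `H_μ(z, w) = (μ²-4)|z|² - 4μ Re(z w̄) + 4|w|²` (`discForm μ`), and a direct computation
shows that `h₂⁻¹` pulls `H_λ` back to `-H_{3λ}`. A point of the closed disc for `λ` has
`Re z ≥ 2/(λ+2) > 2/(3λ-2)`, so it lies outside the closed disc for `3λ`, i.e. `H_{3λ}(z, 1) > 0`.
Hence the denominator of `h₂⁻¹ z` cannot vanish and `H_λ(h₂⁻¹ z, 1) < 0`.
-/

open Complex ComplexConjugate

def discForm (μ : ℝ) (z w : ℂ) : ℝ :=
  (μ ^ 2 - 4) * normSq z - 4 * μ * (z * conj w).re + 4 * normSq w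

theorem discForm_mul_right (μ : ℝ) (u w : ℂ) :
    discForm μ (u * w) w = discForm μ u 1 * normSq w := by
  rw [discForm, discForm, normSq_mul, mul_assoc u w, mul_conj, re_mul_ofReal]
  simp only [map_one, mul_one]
  ring

theorem discForm_div (μ : ℝ) (z : ℂ) {w : ℂ} (hw : w ≠ 0) :
    discForm μ (z / w) 1 * normSq w = discForm μ z w := by
  rw [← discForm_mul_right, div_mul_cancel₀ z hw]

theorem discForm_zero_right (μ : ℝ) (z : ℂ) : discForm μ z 0 = (μ ^ 2 - 4) * normSq z := by
  simp [discForm]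

theorem discForm_mobius (lam : ℝ) (z : ℂ) :
    discForm lam (3 * lam / 2 * z - 1) ((3 * lam ^ 2 / 4 + 1) * z - lam / 2)
      = -discForm (3 * lam) z 1 := by
  simp only [discForm, normSq_apply, map_one, mul_one, sq, mul_re, mul_im, sub_re, sub_im, add_re,
    add_im, one_re, one_im, ofReal_re, ofReal_im, re_ofNat, im_ofNat, div_ofNat_re, div_ofNat_im,
    conj_re, conj_im]
  ring

section
variable {μ : ℝ}

theorem dist_sq_sub_sq_eq_discForm (hμ₁ : μ + 2 ≠ 0) (hμ₂ : μ - 2 ≠ 0) (z : ℂ) :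
    dist z ((2 * μ / ((μ + 2) * (μ - 2)) : ℝ) : ℂ) ^ 2 - (4 / ((μ + 2) * (μ - 2))) ^ 2
      = discForm μ z 1 / ((μ + 2) * (μ - 2)) := by
  rw [dist_eq, ← normSq_eq_norm_sq, normSq_sub, discForm]
  simp only [map_one, mul_one, normSq_ofReal, conj_ofReal, re_mul_ofReal]
  field_simp
  ring

theorem mem_ball_iff_discForm_neg (hμ : 2 < μ) (z : ℂ) :
    z ∈ Metric.ball ((2 * μ / ((μ + 2) * (μ - 2)) : ℝ) : ℂ) (4 / ((μ + 2) * (μ - 2)))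
      ↔ discForm μ z 1 < 0 := by
  have hs : 0 < (μ + 2) * (μ - 2) := by nlinarith
  rw [Metric.mem_ball, ← sq_lt_sq₀ dist_nonneg (by positivity), ← sub_neg,
    dist_sq_sub_sq_eq_discForm (by linarith) (by linarith), div_lt_iff₀ hs, zero_mul]

theorem mem_closedBall_iff_discForm_nonpos (hμ : 2 < μ) (z : ℂ) :
    z ∈ Metric.closedBall ((2 * μ / ((μ + 2) * (μ - 2)) : ℝ) : ℂ) (4 / ((μ + 2) * (μ - 2)))
      ↔ discForm μ z 1 ≤ 0 := by
  have hs : 0 < (μ + 2) * (μ - 2) := by nlinarith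
  rw [Metric.mem_closedBall, ← sq_le_sq₀ dist_nonneg (by positivity), ← sub_nonpos,
    dist_sq_sub_sq_eq_discForm (by linarith) (by linarith), div_le_iff₀ hs, zero_mul]

theorem re_mul_le_discForm (hμ : 4 ≤ μ ^ 2) (z : ℂ) :
    ((μ - 2) * z.re - 2) * ((μ + 2) * z.re - 2) ≤ discForm μ z 1 := by
  have := re_sq_le_normSq z
  simp only [discForm, map_one, mul_one]
  nlinarith

theorem two_div_add_two_le_re (hμ : 2 < μ) {z : ℂ} (hz : discForm μ z 1 ≤ 0) :
    2 / (μ + 2) ≤ z.re := by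
  rw [div_le_iff₀ (by linarith)]
  by_contra! h
  have hadd : (μ + 2) * z.re - 2 < 0 := by linarith
  have hsub : (μ - 2) * z.re - 2 < 0 := by nlinarith
  nlinarith [re_mul_le_discForm (μ := μ) (by nlinarith) z, mul_pos_of_neg_of_neg hsub hadd]

theorem discForm_pos_of_two_div_sub_two_lt_re (hμ : 2 < μ) {z : ℂ} (hz : 2 / (μ - 2) < z.re) :
    0 < discForm μ z 1 := by
  rw [div_lt_iff₀ (by linarith)] at hz
  have hsub : 0 < (μ - 2) * z.re - 2 := by linarith
  have hadd : 0 < (μ + 2) * z.re - 2 := by nlinarith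
  nlinarith [re_mul_le_discForm (μ := μ) (by nlinarith) z, mul_pos hsub hadd]

end

theorem discForm_three_mul_pos {lam : ℝ} (hlam : 2 < lam) {z : ℂ} (hz : discForm lam z 1 ≤ 0) :
    0 < discForm (3 * lam) z 1 :=
  discForm_pos_of_two_div_sub_two_lt_re (by linarith) <|
    (div_lt_div_of_pos_left two_pos (by linarith) (by linarith)).trans_le
      (two_div_add_two_le_re hlam hz)

/-- For `λ > 2` and `h₂ = !![-λ/2, 1; -3λ²/4 - 1, 3λ/2] ∈ SL(2,ℝ)`, the
Möbius transformation of `h₂⁻¹ = !![3λ/2, -1; 3λ²/4 + 1, -λ/2]` is defined on the closure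
of the disc `𝓔₁` and maps it into `𝓔₁`. -/
theorem h2_inv_maps_closure_E1_into_E1
    (lam : ℝ) (hlam : 2 < lam)
    (E1 : Set ℂ)
    (hE1 : E1 = Metric.ball ((((2 * lam) / ((lam + 2) * (lam - 2)) : ℝ)) : ℂ)
      (4 / ((lam + 2) * (lam - 2)))) :
    ∀ z ∈ closure E1,
      ((3 * (lam : ℂ) ^ 2 / 4 + 1) * z - lam / 2 ≠ 0) ∧
      ((3 * (lam : ℂ) / 2) * z - 1) / ((3 * (lam : ℂ) ^ 2 / 4 + 1) * z - lam / 2) ∈ E1 := by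
  intro z hz
  have hs : 0 < (lam + 2) * (lam - 2) := by nlinarith
  rw [hE1, closure_ball _ (by positivity), mem_closedBall_iff_discForm_nonpos hlam] at hz
  have hpos := discForm_three_mul_pos hlam hz
  have hmob := discForm_mobius lam z
  have hD : (3 * (lam : ℂ) ^ 2 / 4 + 1) * z - lam / 2 ≠ 0 := by
    intro hD
    rw [hD, discForm_zero_right] at hmob
    nlinarith [normSq_nonneg (3 * (lam : ℂ) / 2 * z - 1)]
  refine ⟨hD, ?_⟩
  rw [hE1, mem_ball_iff_discForm_neg hlam]
  have hdiv := discForm_div lam (3 * (lam : ℂ) / 2 * z - 1) hD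
  rw [hmob] at hdiv
  exact neg_of_mul_neg_left (hdiv ▸ neg_neg_of_pos hpos) (normSq_nonneg _)
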